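/- Let n be a natural number, W a set of affine subspaces of ℝⁿ, and K ⊆ ℝⁿ a nonempty connected compact set that is approximated from outside by a sequence (D_k)_{k∈ℕ} of open sets, each weakly convex relative to W (for every x in the frontier of D_k there is l ∈ W with x ∈ l and l ∩ D_k = ∅), with D_{k+1} ⊆ D_k for all k, K = ⋂_k D_k, and every open set U containing K contains some D_k. Then K is a connected component of the set K**. -/

import Mathlib

/-- The conjugate set `E* = {l ∈ W | l ∩ E = ∅}` of a set `E ⊆ ℝⁿ` relative to a
set `W` of affine subspaces of `ℝⁿ`. -/
def conjSet {n : ℕ} (W : Set (AffineSubspace ℝ (EuclideanSpace ℝ (Fin n))))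
    (E : Set (EuclideanSpace ℝ (Fin n))) :
    Set (AffineSubspace ℝ (EuclideanSpace ℝ (Fin n))) :=
  {l | l ∈ W ∧ (l : Set (EuclideanSpace ℝ (Fin n))) ∩ E = ∅}

/-- The double conjugate `E** = ℝⁿ \ ⋃ {l : l ∈ E*}`. -/
def biconjSet {n : ℕ} (W : Set (AffineSubspace ℝ (EuclideanSpace ℝ (Fin n))))
    (E : Set (EuclideanSpace ℝ (Fin n))) : Set (EuclideanSpace ℝ (Fin n)) :=
  (⋃ l ∈ conjSet W E, (l : Set (EuclideanSpace ℝ (Fin n))))ᶜ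

/-- A set `E ⊆ ℝⁿ` is convex relative to a set `W` of affine subspaces of `ℝⁿ` if
through every point of its complement there passes an element of `W` disjoint from `E`. -/
def ConvexRel {n : ℕ} (W : Set (AffineSubspace ℝ (EuclideanSpace ℝ (Fin n))))
    (E : Set (EuclideanSpace ℝ (Fin n))) : Prop :=
  ∀ x ∉ E, ∃ l ∈ W, x ∈ l ∧ (l : Set (EuclideanSpace ℝ (Fin n))) ∩ E = ∅

/-!
Let `D` be an open set containing `K`, weakly convex relative to `W`. An element of `W` through a
frontier point of `D` and missing `D` also misses `K`, so it lies in `K*`; hence the frontier of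
`D` does not meet `K**`. The component of `K**` containing a point of `K` is therefore a
preconnected set meeting `D` but not its frontier, so it lies in `D`. Intersecting over the `D k`
puts the component inside `K`, and it contains `K` because `K` is connected and `K ⊆ K**`.
-/

theorem IsPreconnected.subset_of_disjoint_frontier {X : Type*} [TopologicalSpace X]
    {s u : Set X} (hs : IsPreconnected s) (hu : IsOpen u) (hsu : (s ∩ u).Nonempty)
    (hfront : Disjoint s (frontier u)) : s ⊆ u := by
  refine hs.subset_of_closure_inter_subset hu hsu fun z ⟨hzc, hzs⟩ => ?_
  by_contra hzu
  exact hfront.notMem_of_mem_left hzs ⟨hzc, by rwa [hu.interior_eq]⟩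

section Conjugate

variable {n : ℕ} {W : Set (AffineSubspace ℝ (EuclideanSpace ℝ (Fin n)))}
  {E F : Set (EuclideanSpace ℝ (Fin n))}

def WeaklyConvexRel (W : Set (AffineSubspace ℝ (EuclideanSpace ℝ (Fin n))))
    (D : Set (EuclideanSpace ℝ (Fin n))) : Prop :=
  ∀ x ∈ frontier D, ∃ l ∈ W, x ∈ l ∧ (l : Set (EuclideanSpace ℝ (Fin n))) ∩ D = ∅

theorem conjSet_anti (hEF : E ⊆ F) : conjSet W F ⊆ conjSet W E := fun _ ⟨hlW, hlF⟩ =>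
  ⟨hlW, Set.eq_empty_of_subset_empty (hlF ▸ Set.inter_subset_inter_right _ hEF)⟩

theorem notMem_biconjSet_of_mem_conjSet {l : AffineSubspace ℝ (EuclideanSpace ℝ (Fin n))}
    {x : EuclideanSpace ℝ (Fin n)} (hl : l ∈ conjSet W E) (hx : x ∈ l) : x ∉ biconjSet W E :=
  fun hxE => hxE (Set.mem_biUnion hl hx)

theorem subset_biconjSet : E ⊆ biconjSet W E := fun x hx hxU => by
  obtain ⟨l, hl, hxl⟩ := Set.mem_iUnion₂.mp hxU
  exact (Set.eq_empty_iff_forall_notMem.mp hl.2) x ⟨hxl, hx⟩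

theorem WeaklyConvexRel.disjoint_frontier_biconjSet (hD : WeaklyConvexRel W F) (hEF : E ⊆ F) :
    Disjoint (frontier F) (biconjSet W E) := by
  refine Set.disjoint_left.mpr fun x hx => ?_
  obtain ⟨l, hlW, hxl, hlF⟩ := hD x hx
  exact notMem_biconjSet_of_mem_conjSet (conjSet_anti hEF ⟨hlW, hlF⟩) hxl

theorem WeaklyConvexRel.connectedComponentIn_biconjSet_subset (hD : WeaklyConvexRel W F)
    (hF : IsOpen F) (hEF : E ⊆ F) {x : EuclideanSpace ℝ (Fin n)} (hx : x ∈ E) :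
    connectedComponentIn (biconjSet W E) x ⊆ F :=
  isPreconnected_connectedComponentIn.subset_of_disjoint_frontier hF
    ⟨x, mem_connectedComponentIn (subset_biconjSet hx), hEF hx⟩
    ((hD.disjoint_frontier_biconjSet hEF).symm.mono_left (connectedComponentIn_subset _ _))

end Conjugate

theorem weaklyConvex_compact_isComponent_biconj_general {n : ℕ}
    (W : Set (AffineSubspace ℝ (EuclideanSpace ℝ (Fin n))))
    (K : Set (EuclideanSpace ℝ (Fin n)))
    (hconn : IsConnected K)
    (D : ℕ → Set (EuclideanSpace ℝ (Fin n)))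
    (hopen : ∀ k, IsOpen (D k))
    (hweak : ∀ k, ∀ x ∈ frontier (D k),
      ∃ l ∈ W, x ∈ l ∧ (l : Set (EuclideanSpace ℝ (Fin n))) ∩ D k = ∅)
    (hinter : K = ⋂ k, D k) :
    ∃ x ∈ K, connectedComponentIn (biconjSet W K) x = K := by
  obtain ⟨x, hx⟩ := hconn.nonempty
  have hKD : ∀ k, K ⊆ D k := fun k => hinter ▸ Set.iInter_subset D k
  refine ⟨x, hx, Set.Subset.antisymm ?_
    (hconn.isPreconnected.subset_connectedComponentIn hx subset_biconjSet)⟩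
  calc connectedComponentIn (biconjSet W K) x
      ⊆ ⋂ k, D k := Set.subset_iInter fun k =>
        WeaklyConvexRel.connectedComponentIn_biconjSet_subset (hweak k) (hopen k) (hKD k) hx
    _ = K := hinter.symm

/-- Every nonempty connected compact `K`, approximated from outside by a decreasing
sequence of weakly convex open sets, is a connected component of `K**`. -/
theorem weaklyConvex_compact_isComponent_biconj {n : ℕ}
    (W : Set (AffineSubspace ℝ (EuclideanSpace ℝ (Fin n))))
    (K : Set (EuclideanSpace ℝ (Fin n)))
    (hK : IsCompact K) (hconn : IsConnected K)
    (D : ℕ → Set (EuclideanSpace ℝ (Fin n)))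
    (hopen : ∀ k, IsOpen (D k))
    (hweak : ∀ k, ∀ x ∈ frontier (D k),
      ∃ l ∈ W, x ∈ l ∧ (l : Set (EuclideanSpace ℝ (Fin n))) ∩ D k = ∅)
    (hmono : ∀ k, D (k + 1) ⊆ D k)
    (hinter : K = ⋂ k, D k)
    (happrox : ∀ U : Set (EuclideanSpace ℝ (Fin n)), IsOpen U → K ⊆ U → ∃ k, D k ⊆ U) :
    ∃ x ∈ K, connectedComponentIn (biconjSet W K) x = K :=
  weaklyConvex_compact_isComponent_biconj_general W K hconn D hopen hweak hinter
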